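/- arXiv:1508.05572 — 4 statements merged into one kernel-verified Lean document; each statement's English description precedes it below -/
import Mathlib

section
/- Let v > 1 and 0 ≤ a, b ≤ 1. Then D(v−a‖v−b) = (v−a)·log((v−a)/(v−b)) − (v−a) + (v−b) = Σ_{l≥1} (1/(v^l · l(l+1))) · (a^{l+1} − b^l(a + (a−b)l)). -/
/-- Taylor-series representation of the Poisson KL divergence `D(v-a ‖ v-b)` for
`v > 1` and `0 ≤ a, b ≤ 1`: the series `Σ_{l ≥ 1} (1/(v^l l(l+1))) (a^{l+1} - b^l (a + (a-b) l))`
converges to `(v-a) log((v-a)/(v-b)) - (v-a) + (v-b)`. -/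
theorem poisson_kl_series (v a b : ℝ) (hv : 1 < v) (ha0 : 0 ≤ a) (ha1 : a ≤ 1)
    (hb0 : 0 ≤ b) (hb1 : b ≤ 1) :
    HasSum (fun l : ℕ =>
      (1 / (v ^ (l + 1) * ((l + 1 : ℕ) * (l + 2 : ℕ) : ℝ))) *
        (a ^ (l + 2) - b ^ (l + 1) * (a + (a - b) * ((l + 1 : ℕ) : ℝ))))
      ((v - a) * Real.log ((v - a) / (v - b)) - (v - a) + (v - b)) := by
  have hv0 : (0:ℝ) < v := lt_trans one_pos hv
  have hv0' : v ≠ 0 := ne_of_gt hv0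
  have hva : 0 < v - a := by linarith
  have hvb : 0 < v - b := by linarith
  have hx : |a / v| < 1 := by
    rw [abs_div, abs_of_nonneg ha0, abs_of_pos hv0, div_lt_one hv0]; linarith
  have hy : |b / v| < 1 := by
    rw [abs_div, abs_of_nonneg hb0, abs_of_pos hv0, div_lt_one hv0]; linarith
  have h1 := Real.hasSum_pow_div_log_of_abs_lt_one hx
  have h2 := Real.hasSum_pow_div_log_of_abs_lt_one hy
  have h1' : HasSum (fun n : ℕ => (a/v) ^ (n + 2) / ((n : ℝ) + 2))
      (-Real.log (1 - a/v) - a/v) := by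
    have := (hasSum_nat_add_iff' (f := fun n : ℕ => (a/v) ^ (n + 1) / ((n : ℝ) + 1)) 1).mpr
      (by exact_mod_cast h1)
    simp only [Finset.range_one, Finset.sum_singleton] at this
    convert this using 2 with n
    · rfl
    · push_cast; ring_nf
    · norm_num
  have h2' : HasSum (fun n : ℕ => (b/v) ^ (n + 2) / ((n : ℝ) + 2))
      (-Real.log (1 - b/v) - b/v) := by
    have := (hasSum_nat_add_iff' (f := fun n : ℕ => (b/v) ^ (n + 1) / ((n : ℝ) + 1)) 1).mpr
      (by exact_mod_cast h2)
    simp only [Finset.range_one, Finset.sum_singleton] at this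
    convert this using 2 with n
    · rfl
    · push_cast; ring_nf
    · norm_num
  have hsum := (((h1.mul_left a).sub (h1'.mul_left v)).sub (h2.mul_left a)).add
    (h2'.mul_left v)
  have hfun : (fun l : ℕ =>
      (1 / (v ^ (l + 1) * ((l + 1 : ℕ) * (l + 2 : ℕ) : ℝ))) *
        (a ^ (l + 2) - b ^ (l + 1) * (a + (a - b) * ((l + 1 : ℕ) : ℝ))))
      = (fun n : ℕ => a * ((a/v) ^ (n + 1) / ((n:ℝ) + 1)) - v * ((a/v) ^ (n + 2) / ((n:ℝ) + 2))
          - a * ((b/v) ^ (n + 1) / ((n:ℝ) + 1)) + v * ((b/v) ^ (n + 2) / ((n:ℝ) + 2))) := by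
    funext n
    have hn1 : ((n:ℝ) + 1) ≠ 0 := by positivity
    have hn2 : ((n:ℝ) + 2) ≠ 0 := by positivity
    have hvp : (v:ℝ) ^ (n + 1) ≠ 0 := pow_ne_zero _ hv0'
    push_cast
    rw [div_pow, div_pow, div_pow, div_pow]
    field_simp
    ring
  have hval : (v - a) * Real.log ((v - a) / (v - b)) - (v - a) + (v - b)
      = a * -Real.log (1 - a / v) - v * (-Real.log (1 - a / v) - a / v)
        - a * -Real.log (1 - b / v) + v * (-Real.log (1 - b / v) - b / v) := by
    have e1 : 1 - a / v = (v - a) / v := by field_simp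
    have e2 : 1 - b / v = (v - b) / v := by field_simp
    rw [e1, e2, Real.log_div hva.ne' hv0', Real.log_div hvb.ne' hv0',
      Real.log_div hva.ne' hvb.ne']
    field_simp
    ring
  rw [hfun, hval]
  exact hsum
end

section
/- For b with 0 ≤ b < 1, the series Σ_{l≥1} (1/(l(l+1))) · (1 − b^l(1 + (1−b)l)) converges and equals 1 − b. -/
/-! The terms telescope: with `g n = (1 - b^(n+1))/(n+1)` the `l`-th term is `g l - g (l+1)`,
and `g` decreases to `0`, so the series sums to `g 0 = 1 - b`. Monotonicity of `g` is the
inequality `b^n (1 + (1-b) n) ≤ 1`, which is what makes the terms nonnegative. -/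

open Filter Topology

theorem hasSum_sub_succ_of_antitone {f : ℕ → ℝ} {c : ℝ} (hf : Antitone f)
    (hlim : Tendsto f atTop (𝓝 c)) : HasSum (fun n => f n - f (n + 1)) (f 0 - c) := by
  rw [hasSum_iff_tendsto_nat_of_nonneg fun n => sub_nonneg.2 (hf n.le_succ)]
  simp_rw [Finset.sum_range_sub']
  exact tendsto_const_nhds.sub hlim

theorem pow_mul_one_add_sub_mul_le_one {b : ℝ} (hb0 : 0 ≤ b) (hb1 : b ≤ 1) (n : ℕ) :
    b ^ n * (1 + (1 - b) * n) ≤ 1 := by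
  induction n with
  | zero => simp
  | succ n ih =>
    have hpow : b ^ (n + 1) ≤ 1 := pow_le_one₀ hb0 hb1
    calc b ^ (n + 1) * (1 + (1 - b) * (n + 1 : ℕ))
        = b * (b ^ n * (1 + (1 - b) * n)) + (1 - b) * b ^ (n + 1) := by push_cast; ring
      _ ≤ b * 1 + (1 - b) * 1 := by gcongr
      _ = 1 := by ring

theorem one_sub_pow_succ_div_succ_antitone {b : ℝ} (hb0 : 0 ≤ b) (hb1 : b ≤ 1) :
    Antitone fun n : ℕ => (1 - b ^ (n + 1)) / ((n : ℝ) + 1) := by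
  refine antitone_nat_of_succ_le fun n => ?_
  have key := pow_mul_one_add_sub_mul_le_one hb0 hb1 (n + 1)
  push_cast at key ⊢
  rw [div_le_div_iff₀ (by positivity) (by positivity), pow_succ b (n + 1)]
  linarith

theorem tendsto_one_sub_pow_succ_div_succ {b : ℝ} (hb : |b| < 1) :
    Tendsto (fun n : ℕ => (1 - b ^ (n + 1)) / ((n : ℝ) + 1)) atTop (𝓝 0) := by
  have hpow : Tendsto (fun n : ℕ => 1 - b ^ (n + 1)) atTop (𝓝 1) := by
    simpa using tendsto_const_nhds.sub
      ((tendsto_pow_atTop_nhds_zero_of_abs_lt_one hb).comp (tendsto_add_atTop_nat 1))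
  simpa [div_eq_mul_inv] using hpow.mul tendsto_one_div_add_atTop_nhds_zero_nat

/-- For `0 ≤ b < 1`, the series `Σ_{l ≥ 1} (1/(l(l+1))) (1 - b^l (1 + (1-b) l))`
converges and equals `1 - b`. -/
theorem series_eq_one_sub (b : ℝ) (hb0 : 0 ≤ b) (hb1 : b < 1) :
    HasSum (fun l : ℕ =>
      (1 / (((l + 1 : ℕ) : ℝ) * ((l + 2 : ℕ) : ℝ))) *
        (1 - b ^ (l + 1) * (1 + (1 - b) * ((l + 1 : ℕ) : ℝ))))
      (1 - b) := by
  have hsum := hasSum_sub_succ_of_antitone (one_sub_pow_succ_div_succ_antitone hb0 hb1.le)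
    (tendsto_one_sub_pow_succ_div_succ (abs_lt.2 ⟨by linarith, hb1⟩))
  convert hsum using 1
  · ext l
    push_cast
    field_simp
    ring
  · simp
end

section
/- For all v ≥ 1 and c = 0.9, D(v−1‖v−c) − 0.5·D(v‖v−c) < 0. -/
/-!
The first divergence is bounded above by the χ² bound `D x y ≤ (x - y)² / y`, a consequence of
`log u ≤ u - 1`; the second is bounded below by `(x - y)² / (2 x)`, from
`-log (1 - t) ≥ t + t² / 2`. With `c = 0.9` this leaves `0.01 / (v - 0.9) < 0.2025 / v`,
which holds as soon as `v > 0.18225 / 0.1925 ≈ 0.947`.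
-/

noncomputable def D (x y : ℝ) : ℝ := x * Real.log (x / y) - x + y

lemma add_sq_div_two_le_neg_log_one_sub {t : ℝ} (h0 : 0 ≤ t) (h1 : t < 1) :
    t + t ^ 2 / 2 ≤ -Real.log (1 - t) := by
  have hs := Real.hasSum_pow_div_log_of_abs_lt_one (by rwa [abs_of_nonneg h0])
  have h := sum_le_hasSum (Finset.range 2) (fun i _ => by positivity) hs
  simpa [Finset.sum_range_succ, one_add_one_eq_two] using h

lemma D_le_sq_div {x y : ℝ} (hx : 0 ≤ x) (hy : 0 < y) : D x y ≤ (x - y) ^ 2 / y := by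
  have hlog : x * Real.log (x / y) ≤ x * (x / y - 1) := by
    rcases hx.eq_or_lt with rfl | hx
    · simp
    · exact mul_le_mul_of_nonneg_left (Real.log_le_sub_one_of_pos (by positivity)) hx.le
  calc D x y ≤ x * (x / y - 1) - x + y := by unfold D; linarith
    _ = (x - y) ^ 2 / y := by field_simp; ring

lemma sq_div_two_mul_le_D {x y : ℝ} (hy : 0 < y) (hyx : y ≤ x) :
    (x - y) ^ 2 / (2 * x) ≤ D x y := by
  have hx : 0 < x := hy.trans_le hyx
  have hlog : Real.log (x / y) = -Real.log (1 - (x - y) / x) := by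
    rw [one_sub_div hx.ne', sub_sub_cancel, ← Real.log_inv, inv_div]
  have hbound := add_sq_div_two_le_neg_log_one_sub (t := (x - y) / x)
    (div_nonneg (sub_nonneg.2 hyx) hx.le) (by rw [div_lt_one hx]; linarith)
  calc (x - y) ^ 2 / (2 * x) = x * ((x - y) / x + ((x - y) / x) ^ 2 / 2) - x + y := by
        field_simp; ring
    _ ≤ D x y := by
        unfold D
        rw [hlog]
        gcongr

/-- For all `v ≥ 1` and `c = 0.9`, `D(v-1 ‖ v-c) - 0.5 D(v ‖ v-c) < 0`. -/
theorem kl_diff_negative (v : ℝ) (hv : 1 ≤ v) :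
    D (v - 1) (v - 0.9) - 0.5 * D v (v - 0.9) < 0 := by
  have hv9 : 0 < v - 0.9 := by linarith
  have hv0 : 0 < v := by linarith
  have hfirst := D_le_sq_div (x := v - 1) (by linarith) hv9
  have hsecond := sq_div_two_mul_le_D hv9 (by linarith : v - 0.9 ≤ v)
  have hgap : (v - 1 - (v - 0.9)) ^ 2 / (v - 0.9) < 0.5 * ((v - (v - 0.9)) ^ 2 / (2 * v)) := by
    rw [div_lt_iff₀ hv9]
    field_simp
    nlinarith
  linarith
end

section
/- Let c ∈ (0,1) and suppose 1 − c^l(1 + l − 0.5cl) ≤ 0 for all integers 1 ≤ l < M and ≥ 0 for all l ≥ M, for some M ≥ 1, and suppose Σ_{l≥1} (1/(l(l+1)))(1 − c^l(1+l−0.5cl)) < 0. Then for every v > 1, Σ_{l≥1} (1/(v^l l(l+1)))(1 − c^l(1+l−0.5cl)) ≤ (1/v^M)·Σ_{l≥1} (1/(l(l+1)))(1 − c^l(1+l−0.5cl)) < 0. -/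
/-- Comparison argument: if the terms `g l = 1 - c^l (1 + l - 0.5 c l)` are `≤ 0` for
`1 ≤ l < M` and `≥ 0` for `l ≥ M`, and `Σ_{l≥1} g l / (l(l+1)) < 0`, then for every
`v > 1` the series `Σ_{l≥1} g l / (v^l l(l+1))` is at most `(1/v^M)` times that
negative sum, hence negative. -/
theorem series_comparison (c : ℝ) (hc0 : 0 < c) (hc1 : c < 1) (M : ℕ) (hM : 1 ≤ M)
    (hneg : ∀ l : ℕ, 1 ≤ l → l < M →
      1 - c ^ l * (1 + (l : ℝ) - 0.5 * c * (l : ℝ)) ≤ 0)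
    (hpos : ∀ l : ℕ, M ≤ l →
      0 ≤ 1 - c ^ l * (1 + (l : ℝ) - 0.5 * c * (l : ℝ)))
    (hS : (∑' l : ℕ, (1 / (((l + 1 : ℕ) : ℝ) * ((l + 2 : ℕ) : ℝ))) *
        (1 - c ^ (l + 1) * (1 + ((l + 1 : ℕ) : ℝ) - 0.5 * c * ((l + 1 : ℕ) : ℝ)))) < 0) :
    ∀ v : ℝ, 1 < v →
      (∑' l : ℕ, (1 / (v ^ (l + 1) * (((l + 1 : ℕ) : ℝ) * ((l + 2 : ℕ) : ℝ)))) *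
          (1 - c ^ (l + 1) * (1 + ((l + 1 : ℕ) : ℝ) - 0.5 * c * ((l + 1 : ℕ) : ℝ))))
        ≤ (1 / v ^ M) *
          (∑' l : ℕ, (1 / (((l + 1 : ℕ) : ℝ) * ((l + 2 : ℕ) : ℝ))) *
            (1 - c ^ (l + 1) * (1 + ((l + 1 : ℕ) : ℝ) - 0.5 * c * ((l + 1 : ℕ) : ℝ)))) ∧
      (1 / v ^ M) *
          (∑' l : ℕ, (1 / (((l + 1 : ℕ) : ℝ) * ((l + 2 : ℕ) : ℝ))) *
            (1 - c ^ (l + 1) * (1 + ((l + 1 : ℕ) : ℝ) - 0.5 * c * ((l + 1 : ℕ) : ℝ)))) < 0 := by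
  intro v hv
  have hv0 : (0:ℝ) < v := lt_trans one_pos hv
  set g : ℕ → ℝ := fun n => 1 - c ^ n * (1 + (n : ℝ) - 0.5 * c * (n : ℝ)) with hg
  set F : ℕ → ℝ := fun l => (1 / (((l + 1 : ℕ) : ℝ) * ((l + 2 : ℕ) : ℝ))) * g (l + 1) with hF
  set Fv : ℕ → ℝ := fun l =>
    (1 / (v ^ (l + 1) * (((l + 1 : ℕ) : ℝ) * ((l + 2 : ℕ) : ℝ)))) * g (l + 1) with hFv
  -- abs bound on g
  have habs : ∀ n : ℕ, |g n| ≤ 1 + c ^ n * ((n : ℝ) + 1) := by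
    intro n
    have hn : (0:ℝ) ≤ (n:ℝ) := Nat.cast_nonneg n
    have hcn : (0:ℝ) ≤ c ^ n := by positivity
    have h1 : (0:ℝ) ≤ 1 + (n:ℝ) - 0.5 * c * (n:ℝ) := by nlinarith
    have h2 : 1 + (n:ℝ) - 0.5 * c * (n:ℝ) ≤ (n:ℝ) + 1 := by nlinarith
    rw [abs_le]
    constructor
    · simp only [hg]
      nlinarith [mul_le_mul_of_nonneg_left h2 hcn]
    · simp only [hg]
      nlinarith [mul_nonneg hcn h1]
  -- summable dominating series
  have hdom : Summable (fun l : ℕ => 1 / ((l:ℝ) + 1) ^ 2 + c ^ (l + 1)) := by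
    apply Summable.add
    · have h0 : Summable (fun n : ℕ => 1 / (n:ℝ) ^ 2) :=
        Real.summable_one_div_nat_pow.mpr one_lt_two
      have := (summable_nat_add_iff 1).mpr h0
      convert this using 2 with l
      · rfl
      push_cast
      ring
    · simp only [pow_succ]
      exact (summable_geometric_of_lt_one hc0.le hc1).mul_right c
  have hFbound : ∀ l : ℕ, |F l| ≤ 1 / ((l:ℝ) + 1) ^ 2 + c ^ (l + 1) := by
    intro l
    have hL : (0:ℝ) < ((l:ℝ) + 1) := by positivity
    have hK : (0:ℝ) < ((l:ℝ) + 2) := by positivity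
    have hD : (0:ℝ) < (((l + 1 : ℕ) : ℝ) * ((l + 2 : ℕ) : ℝ)) := by positivity
    have h1 : |F l| ≤ (1 / (((l:ℝ)+1) * ((l:ℝ)+2))) * (1 + c ^ (l+1) * ((l:ℝ) + 2)) := by
      rw [hF]
      simp only
      rw [abs_mul, abs_of_pos (by positivity : (0:ℝ) < 1 / (((l + 1 : ℕ) : ℝ) * ((l + 2 : ℕ) : ℝ)))]
      push_cast
      have := habs (l + 1)
      push_cast at this
      have h2 : (0:ℝ) ≤ 1 / (((l:ℝ)+1) * ((l:ℝ)+2)) := by positivity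
      nlinarith [this, abs_nonneg (g (l+1))]
    refine h1.trans ?_
    rw [one_div, inv_mul_le_iff₀ (by positivity)]
    have ht : (0:ℝ) ≤ c ^ (l+1) := by positivity
    have hKL : (1:ℝ) ≤ ((l:ℝ)+2) / ((l:ℝ)+1) := by
      rw [le_div_iff₀ hL]; linarith
    have hexp : (((l:ℝ)+1) * ((l:ℝ)+2)) * (1 / ((l:ℝ)+1)^2 + c^(l+1))
        = ((l:ℝ)+2)/((l:ℝ)+1) + c^(l+1) * (((l:ℝ)+1) * ((l:ℝ)+2)) := by
      field_simp
    rw [hexp]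
    nlinarith [mul_nonneg (mul_nonneg ht hK.le) (by linarith : (0:ℝ) ≤ (l:ℝ))]
  have hFsum : Summable F :=
    Summable.of_norm_bounded hdom (fun l => by rw [Real.norm_eq_abs]; exact hFbound l)
  have hFvsum : Summable Fv := by
    apply Summable.of_norm_bounded hdom
    intro l
    rw [Real.norm_eq_abs]
    refine le_trans ?_ (hFbound l)
    have hvp : (1:ℝ) ≤ v ^ (l+1) := one_le_pow₀ hv.le
    have hD : (0:ℝ) < (((l + 1 : ℕ) : ℝ) * ((l + 2 : ℕ) : ℝ)) := by positivity
    simp only [hF, hFv, abs_mul]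
    apply mul_le_mul_of_nonneg_right _ (abs_nonneg _)
    rw [abs_of_pos (by positivity), abs_of_pos (by positivity)]
    apply one_div_le_one_div_of_le hD
    nlinarith
  -- termwise comparison
  have key : ∀ l : ℕ, Fv l ≤ (1 / v ^ M) * F l := by
    intro l
    have hD : (0:ℝ) < (((l + 1 : ℕ) : ℝ) * ((l + 2 : ℕ) : ℝ)) := by positivity
    have heq : (1 / v ^ M) * F l = (1 / (v ^ M * (((l + 1 : ℕ) : ℝ) * ((l + 2 : ℕ) : ℝ)))) * g (l+1) := by
      simp only [hF]
      field_simp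
    rw [heq]
    simp only [hFv]
    rcases le_or_gt M (l + 1) with h | h
    · have hg0 : 0 ≤ g (l + 1) := hpos _ h
      have hvp : v ^ M ≤ v ^ (l + 1) := pow_le_pow_right₀ hv.le h
      apply mul_le_mul_of_nonneg_right _ hg0
      apply one_div_le_one_div_of_le (by positivity)
      exact mul_le_mul_of_nonneg_right hvp hD.le
    · have hg0 : g (l + 1) ≤ 0 := hneg _ (Nat.le_add_left 1 l) h
      have hvp : v ^ (l + 1) ≤ v ^ M := pow_le_pow_right₀ hv.le (by omega)
      apply mul_le_mul_of_nonpos_right _ hg0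
      apply one_div_le_one_div_of_le (by positivity)
      exact mul_le_mul_of_nonneg_right hvp hD.le
  constructor
  · calc (∑' l, Fv l) ≤ ∑' l, (1 / v ^ M) * F l :=
          Summable.tsum_le_tsum key hFvsum (hFsum.mul_left _)
      _ = (1 / v ^ M) * ∑' l, F l := tsum_mul_left
  · exact mul_neg_of_pos_of_neg (by positivity) hS
end
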